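/- Let t : [0,1] → [0,∞] be continuous, strictly decreasing with t(1) = 0 (an additive generator of a continuous Archimedean t-norm T(x,y) = t^{(−1)}(t(x)+t(y)), where t^{(−1)}(x) = t⁻¹(min(t(0), x))). Let L be a binary operation on [0,∞] and w₁,…,w_n ≥ 0 with Σw_i = 1. If γ^{(1)},…,γ^{(n)} are τ_{L,T}-submeasures on Σ, then γ defined by γ_E(x) = t^{(−1)}(Σᵢ wᵢ t(γ^{(i)}_E(x))) is also a τ_{L,T}-submeasure on Σ. -/

import Mathlib

open Set
open scoped ENNReal Classical

noncomputable section

def eps0 (x : ℝ) : ℝ := if 0 < x then 1 else 0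

def IsDistrFn (F : ℝ → ℝ) : Prop :=
  Monotone F ∧ (∀ x, x ≤ 0 → F x = 0) ∧ (∀ x, F x ≤ 1)

def IsSetRing {Ω : Type*} (R : Set (Set Ω)) : Prop :=
  ∅ ∈ R ∧ (∀ E F : Set Ω, E ∈ R → F ∈ R → E ∪ F ∈ R) ∧
    (∀ E F : Set Ω, E ∈ R → F ∈ R → E \ F ∈ R)

def IsNumSubmeasure {Ω : Type*} (R : Set (Set Ω)) (η : Set Ω → ℝ≥0∞) : Prop :=
  η ∅ = 0 ∧ (∀ E F : Set Ω, E ∈ R → F ∈ R → E ⊆ F → η E ≤ η F) ∧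
    (∀ E F : Set Ω, E ∈ R → F ∈ R → η (E ∪ F) ≤ η E + η F)

/-- `γ` is a `τ_{L,A}`-submeasure on the ring `R`. -/
def IsTauSub {Ω : Type*} (R : Set (Set Ω)) (L : ℝ → ℝ → ℝ) (A : ℝ → ℝ → ℝ)
    (γ : Set Ω → ℝ → ℝ) : Prop :=
  (∀ E, E ∈ R → IsDistrFn (γ E)) ∧
  (∀ x, γ ∅ x = eps0 x) ∧
  (∀ E F : Set Ω, E ∈ R → F ∈ R → E ⊆ F → ∀ x, γ F x ≤ γ E x) ∧
  (∀ E F : Set Ω, E ∈ R → F ∈ R → ∀ x y : ℝ, 0 < x → 0 < y →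
    A (γ E x) (γ F y) ≤ γ (E ∪ F) (L x y))

def IsTnorm (T : ℝ → ℝ → ℝ) : Prop :=
  (∀ u v, T u v = T v u) ∧ (∀ u v w, T (T u v) w = T u (T v w)) ∧
  (∀ u u' v, u ∈ Icc (0:ℝ) 1 → u' ∈ Icc (0:ℝ) 1 → v ∈ Icc (0:ℝ) 1 → u ≤ u' →
    T u v ≤ T u' v) ∧
  (∀ u ∈ Icc (0:ℝ) 1, T u 1 = u) ∧
  (∀ u v, u ∈ Icc (0:ℝ) 1 → v ∈ Icc (0:ℝ) 1 → T u v ∈ Icc (0:ℝ) 1)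

/-!
Since the generator `t` is antitone and `t (tinv y) = min (t 0) y`, the defining inequality of a
`τ_{L,T}`-submeasure for `γ⁽ⁱ⁾` gives
`t (γ⁽ⁱ⁾_{E∪F} (L x y)) ≤ min (t 0) (t (γ⁽ⁱ⁾_E x) + t (γ⁽ⁱ⁾_F y))`.
Averaging these with the weights `wᵢ` and using that truncation at `t 0` is subadditive and commutes
(up to `≤`) with convex combinations gives the same inequality for the mean `γ`.
-/

open Finset

lemma IsDistrFn.mem_Icc {F : ℝ → ℝ} (hF : IsDistrFn F) (x : ℝ) : F x ∈ Icc (0 : ℝ) 1 := by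
  obtain ⟨hmono, hzero, hle⟩ := hF
  refine ⟨?_, hle x⟩
  calc (0 : ℝ) = F (min x 0) := (hzero _ (min_le_right x 0)).symm
    _ ≤ F x := hmono (min_le_left x 0)

lemma eps0_mem_Icc (x : ℝ) : eps0 x ∈ Icc (0 : ℝ) 1 := by
  unfold eps0
  split_ifs <;> simp

lemma min_add_le_min_add_min {α : Type*} [AddCommMonoid α] [LinearOrder α]
    [CanonicallyOrderedAdd α] [IsOrderedAddMonoid α] (a b c : α) :
    min c (a + b) ≤ min c a + min c b := by
  rcases le_total c a with hca | hac
  · exact (min_le_left c _).trans (by rw [min_eq_left hca]; exact le_self_add)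
  rcases le_total c b with hcb | hbc
  · exact (min_le_left c _).trans (by rw [min_eq_left hcb]; exact le_add_self)
  · rw [min_eq_right hac, min_eq_right hbc]
    exact min_le_right _ _

lemma ENNReal.sum_mul_min_le_min_sum_mul {ι : Type*} (s : Finset ι) {w : ι → ℝ≥0∞}
    (hw : ∑ i ∈ s, w i ≤ 1) (c : ℝ≥0∞) (f : ι → ℝ≥0∞) :
    ∑ i ∈ s, w i * min c (f i) ≤ min c (∑ i ∈ s, w i * f i) := by
  refine le_min ?_ (sum_le_sum fun i _ => mul_le_mul_right (min_le_right _ _) _)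
  calc ∑ i ∈ s, w i * min c (f i) ≤ ∑ i ∈ s, w i * c :=
        sum_le_sum fun i _ => mul_le_mul_right (min_le_left _ _) _
    _ = (∑ i ∈ s, w i) * c := (sum_mul ..).symm
    _ ≤ c := mul_le_of_le_one_left' hw

section GeneratedMean

variable {ι : Type*} [Fintype ι] {t : ℝ → ℝ≥0∞} {tinv : ℝ≥0∞ → ℝ} {w : ι → ℝ≥0∞}

lemma tinv_sum_mul_eq_of_forall_eq (htinv_left : ∀ x ∈ Icc (0 : ℝ) 1, tinv (t x) = x)
    (hw : ∑ i, w i = 1) {a : ι → ℝ} {c : ℝ} (hc : c ∈ Icc (0 : ℝ) 1) (ha : ∀ i, a i = c) :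
    tinv (∑ i, w i * t (a i)) = c := by
  simp only [ha, ← sum_mul, hw, one_mul]
  exact htinv_left c hc

lemma tinv_sum_mul_mono (ht : AntitoneOn t (Icc 0 1)) (htinv : Antitone tinv)
    {a b : ι → ℝ} (ha : ∀ i, a i ∈ Icc (0 : ℝ) 1) (hb : ∀ i, b i ∈ Icc (0 : ℝ) 1)
    (hab : ∀ i, a i ≤ b i) :
    tinv (∑ i, w i * t (a i)) ≤ tinv (∑ i, w i * t (b i)) :=
  htinv <| sum_le_sum fun i _ => mul_le_mul_right (ht (ha i) (hb i) (hab i)) _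

lemma tinv_add_le_tinv_sum_mul (ht : AntitoneOn t (Icc 0 1))
    (htinv_right : ∀ y, t (tinv y) = min (t 0) y) (htinv_mem : ∀ y, tinv y ∈ Icc (0 : ℝ) 1)
    (htinv : Antitone tinv) (hw : ∑ i, w i ≤ 1) {a b c : ι → ℝ}
    (hc : ∀ i, c i ∈ Icc (0 : ℝ) 1) (habc : ∀ i, tinv (t (a i) + t (b i)) ≤ c i) :
    tinv (t (tinv (∑ i, w i * t (a i))) + t (tinv (∑ i, w i * t (b i)))) ≤
      tinv (∑ i, w i * t (c i)) := by
  have hcab : ∀ i, t (c i) ≤ min (t 0) (t (a i) + t (b i)) := fun i => by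
    rw [← htinv_right]
    exact ht (htinv_mem _) (hc i) (habc i)
  rw [htinv_right, htinv_right]
  refine htinv ?_
  calc ∑ i, w i * t (c i)
      ≤ ∑ i, w i * (min (t 0) (t (a i)) + min (t 0) (t (b i))) :=
        sum_le_sum fun i _ => mul_le_mul_right ((hcab i).trans (min_add_le_min_add_min ..)) _
    _ = ∑ i, w i * min (t 0) (t (a i)) + ∑ i, w i * min (t 0) (t (b i)) := by
        simp only [mul_add, sum_add_distrib]
    _ ≤ min (t 0) (∑ i, w i * t (a i)) + min (t 0) (∑ i, w i * t (b i)) :=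
        add_le_add (ENNReal.sum_mul_min_le_min_sum_mul _ hw _ _)
          (ENNReal.sum_mul_min_le_min_sum_mul _ hw _ _)

end GeneratedMean

theorem stmt13_general {Ω : Type*} (R : Set (Set Ω)) (hR : IsSetRing R)
    (t : ℝ → ℝ≥0∞) (tinv : ℝ≥0∞ → ℝ)
    (hta : StrictAntiOn t (Icc 0 1))
    (htinv_left : ∀ x ∈ Icc (0:ℝ) 1, tinv (t x) = x)
    (htinv_right : ∀ y, t (tinv y) = min (t 0) y)
    (htinv_mem : ∀ y, tinv y ∈ Icc (0:ℝ) 1) (htinv_anti : Antitone tinv)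
    (L : ℝ → ℝ → ℝ) (n : ℕ) (w : Fin n → ℝ≥0∞) (hw : ∑ i, w i = 1)
    (γs : Fin n → Set Ω → ℝ → ℝ)
    (hγs : ∀ i, IsTauSub R L (fun u v => tinv (t u + t v)) (γs i)) :
    IsTauSub R L (fun u v => tinv (t u + t v))
      (fun E x => tinv (∑ i, w i * t (γs i E x))) := by
  have hmem : ∀ E ∈ R, ∀ x i, γs i E x ∈ Icc (0 : ℝ) 1 :=
    fun E hE x i => ((hγs i).1 E hE).mem_Icc x
  refine ⟨fun E hE => ⟨fun x y hxy => ?_, fun x hx => ?_, fun x => (htinv_mem _).2⟩,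
    fun x => ?_, fun E F hE hF hEF x => ?_, fun E F hE hF x y hx hy => ?_⟩
  · exact tinv_sum_mul_mono hta.antitoneOn htinv_anti (hmem E hE x) (hmem E hE y)
      fun i => ((hγs i).1 E hE).1 hxy
  · exact tinv_sum_mul_eq_of_forall_eq htinv_left hw ⟨le_rfl, zero_le_one⟩
      fun i => ((hγs i).1 E hE).2.1 x hx
  · exact tinv_sum_mul_eq_of_forall_eq htinv_left hw (eps0_mem_Icc x) fun i => (hγs i).2.1 x
  · exact tinv_sum_mul_mono hta.antitoneOn htinv_anti (hmem F hF x) (hmem E hE x)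
      fun i => (hγs i).2.2.1 E F hE hF hEF x
  · exact tinv_add_le_tinv_sum_mul hta.antitoneOn htinv_right htinv_mem htinv_anti hw.le
      (hmem _ (hR.2.1 E F hE hF) _) fun i => (hγs i).2.2.2 E F hE hF x y hx hy

/-- the weighted quasi-arithmetic mean generated by an additive generator
`t` (with pseudo-inverse `tinv`) of a continuous Archimedean t-norm
`T(u,v) = tinv (t u + t v)` preserves the class of `τ_{L,T}`-submeasures. -/
theorem stmt13 {Ω : Type*} (R : Set (Set Ω)) (hR : IsSetRing R)
    (t : ℝ → ℝ≥0∞) (tinv : ℝ≥0∞ → ℝ)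
    (htc : ContinuousOn t (Icc 0 1)) (hta : StrictAntiOn t (Icc 0 1)) (ht1 : t 1 = 0)
    (htinv_left : ∀ x ∈ Icc (0:ℝ) 1, tinv (t x) = x)
    (htinv_right : ∀ y, t (tinv y) = min (t 0) y)
    (htinv_mem : ∀ y, tinv y ∈ Icc (0:ℝ) 1) (htinv_anti : Antitone tinv)
    (L : ℝ → ℝ → ℝ) (n : ℕ) (w : Fin n → ℝ≥0∞) (hw : ∑ i, w i = 1)
    (γs : Fin n → Set Ω → ℝ → ℝ)
    (hγs : ∀ i, IsTauSub R L (fun u v => tinv (t u + t v)) (γs i)) :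
    IsTauSub R L (fun u v => tinv (t u + t v))
      (fun E x => tinv (∑ i, w i * t (γs i E x))) :=
  stmt13_general R hR t tinv hta htinv_left htinv_right htinv_mem htinv_anti L n w hw γs hγs
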